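/- arXiv:2605.07970 — 2 statements merged into one kernel-verified Lean document; each statement's English description precedes it below -/
import Mathlib

section
/- Let (X, μ) be a probability measure space, let s ∈ [1, ∞), and let F : X × W → ℝ be given on a neighborhood of a point by a power series F(x, u) = Σ_α a_α(x) u^α (sum over multi-indices α ∈ ℤ_{≥0}^d) with each coefficient a_α ∈ L^s(μ), absolutely convergent in the normed space L^s(μ) for u in a polydisc of radius R > 0. Then for any radius r < R and a suitable measurable representative: (1) for μ-almost every x, the function u ↦ F(x, u) is given by an absolutely convergent pointwise power series on the polydisc of radius r (in particular is real analytic there); and (2) the function x ↦ sup_{|u| ≤ r} |F(x, u)| is dominated by G(x) = Σ_α |a_α(x)| r^{|α|}, which lies in L^s(μ). -/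
open MeasureTheory Filter Topology
open scoped ENNReal NNReal

/-- An `L^s(μ)`-valued real analytic expansion upgrades to pointwise
analyticity a.e. with an `L^s` dominating function. -/
theorem stmt_0 {X : Type*} [MeasurableSpace X] (μ : Measure X) [IsProbabilityMeasure μ]
    (s : ℝ≥0∞) (hs : 1 ≤ s) (hs' : s ≠ ∞) {d : ℕ}
    (a : (Fin d → ℕ) → X → ℝ) (ha : ∀ α, MemLp (a α) s μ)
    (R : ℝ) (hR : 0 < R)
    (hconv : ∀ u : Fin d → ℝ, (∀ i, |u i| < R) →
      Summable (fun α : Fin d → ℕ =>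
        (eLpNorm (a α) s μ).toReal * ∏ i, |u i| ^ α i))
    (r : ℝ) (hr : 0 < r) (hrR : r < R) :
    (∀ᵐ x ∂μ, ∀ u : Fin d → ℝ, (∀ i, |u i| ≤ r) →
        Summable (fun α : Fin d → ℕ => |a α x| * ∏ i, |u i| ^ α i)) ∧
    MemLp (fun x => ∑' α : Fin d → ℕ, |a α x| * r ^ (∑ i, α i)) s μ ∧
    (∀ᵐ x ∂μ, ∀ u : Fin d → ℝ, (∀ i, |u i| ≤ r) →
        |∑' α : Fin d → ℕ, a α x * ∏ i, u i ^ α i|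
          ≤ ∑' α : Fin d → ℕ, |a α x| * r ^ (∑ i, α i)) := by
  classical
  have habs : |r| = r := abs_of_pos hr
  have hprod : ∀ (α : Fin d → ℕ), (∏ i, r ^ α i) = r ^ (∑ i, α i) := fun α =>
    Finset.prod_pow_eq_pow_sum _ _ _
  have hS : Summable (fun α : Fin d → ℕ =>
      (eLpNorm (a α) s μ).toReal * r ^ (∑ i, α i)) := by
    have := hconv (fun _ => r) (fun i => by rw [habs]; exact hrR)
    simpa [habs, hprod] using this
  have hterm_nonneg : ∀ α : Fin d → ℕ,
      0 ≤ (eLpNorm (a α) s μ).toReal * r ^ (∑ i, α i) :=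
    fun α => mul_nonneg ENNReal.toReal_nonneg (pow_nonneg hr.le _)
  set C : ℝ≥0∞ := ENNReal.ofReal
      (∑' α : Fin d → ℕ, (eLpNorm (a α) s μ).toReal * r ^ (∑ i, α i)) with hC
  have hC_lt : C < ∞ := ENNReal.ofReal_lt_top
  have hCsum : (∑' α : Fin d → ℕ,
      ENNReal.ofReal (r ^ (∑ i, α i)) * eLpNorm (a α) s μ) = C := by
    rw [hC, ENNReal.ofReal_tsum_of_nonneg hterm_nonneg hS]
    refine tsum_congr fun α => ?_
    rw [ENNReal.ofReal_mul ENNReal.toReal_nonneg, ENNReal.ofReal_toReal (ha α).2.ne,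
      mul_comm]
  -- a.e. summability of the dominating series
  have hmeas : ∀ α : Fin d → ℕ, AEMeasurable
      (fun x => (‖a α x‖₊ : ℝ≥0∞) * ENNReal.ofReal (r ^ (∑ i, α i))) μ :=
    fun α => ((ha α).aestronglyMeasurable.enorm).mul_const _
  have hlint : (∫⁻ x, ∑' α : Fin d → ℕ,
      (‖a α x‖₊ : ℝ≥0∞) * ENNReal.ofReal (r ^ (∑ i, α i)) ∂μ) ≠ ∞ := by
    rw [lintegral_tsum hmeas]
    refine ne_of_lt (lt_of_le_of_lt ?_ hC_lt)
    rw [← hCsum]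
    refine ENNReal.tsum_le_tsum fun α => ?_
    rw [lintegral_mul_const'' _ (f := fun x => (‖a α x‖₊ : ℝ≥0∞)) (ha α).aestronglyMeasurable.enorm]
    have h1 : (∫⁻ x, (‖a α x‖₊ : ℝ≥0∞) ∂μ) ≤ eLpNorm (a α) s μ := by
      refine le_trans (le_of_eq (eLpNorm_one_eq_lintegral_enorm (f := a α) (μ := μ)).symm) ?_
      exact eLpNorm_le_eLpNorm_of_exponent_le hs (ha α).1
    calc (∫⁻ x, (‖a α x‖₊ : ℝ≥0∞) ∂μ) * ENNReal.ofReal (r ^ (∑ i, α i))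
        ≤ eLpNorm (a α) s μ * ENNReal.ofReal (r ^ (∑ i, α i)) :=
          mul_le_mul_left h1 _
      _ = ENNReal.ofReal (r ^ (∑ i, α i)) * eLpNorm (a α) s μ := mul_comm _ _
  have hAE : ∀ᵐ x ∂μ, Summable (fun α : Fin d → ℕ => |a α x| * r ^ (∑ i, α i)) := by
    have h1 : ∀ᵐ x ∂μ, (∑' α : Fin d → ℕ,
        (‖a α x‖₊ : ℝ≥0∞) * ENNReal.ofReal (r ^ (∑ i, α i))) < ∞ :=
      ae_lt_top' (AEMeasurable.ennreal_tsum hmeas) hlint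
    filter_upwards [h1] with x hx
    have heq : ∀ α : Fin d → ℕ, (‖a α x‖₊ : ℝ≥0∞) * ENNReal.ofReal (r ^ (∑ i, α i))
        = ENNReal.ofReal (|a α x| * r ^ (∑ i, α i)) := fun α => by
      rw [ENNReal.ofReal_mul (abs_nonneg _)]
      exact congrArg (· * _) (Real.enorm_eq_ofReal_abs (a α x))
    rw [tsum_congr heq] at hx
    have := ENNReal.summable_toReal hx.ne
    exact this.congr fun α =>
      ENNReal.toReal_ofReal (mul_nonneg (abs_nonneg _) (pow_nonneg hr.le _))
  have key_le : ∀ (x : X) (u : Fin d → ℝ), (∀ i, |u i| ≤ r) → ∀ α : Fin d → ℕ,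
      |a α x| * ∏ i, |u i| ^ α i ≤ |a α x| * r ^ (∑ i, α i) := by
    intro x u hu α
    refine mul_le_mul_of_nonneg_left ?_ (abs_nonneg _)
    calc (∏ i, |u i| ^ α i) ≤ ∏ i, r ^ α i :=
          Finset.prod_le_prod (fun i _ => pow_nonneg (abs_nonneg _) _)
            (fun i _ => pow_le_pow_left₀ (abs_nonneg _) (hu i) _)
      _ = r ^ (∑ i, α i) := hprod α
  have hnn : ∀ (x : X) (u : Fin d → ℝ) (α : Fin d → ℕ),
      0 ≤ |a α x| * ∏ i, |u i| ^ α i := fun x u α =>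
    mul_nonneg (abs_nonneg _) (Finset.prod_nonneg fun i _ => pow_nonneg (abs_nonneg _) _)
  have part1 : ∀ᵐ x ∂μ, ∀ u : Fin d → ℝ, (∀ i, |u i| ≤ r) →
      Summable (fun α : Fin d → ℕ => |a α x| * ∏ i, |u i| ^ α i) := by
    filter_upwards [hAE] with x hx u hu
    exact hx.of_nonneg_of_le (hnn x u) (key_le x u hu)
  refine ⟨part1, ?_, ?_⟩
  · -- MemLp of the dominating function
    set b : (Fin d → ℕ) → X → ℝ := fun α => (ha α).1.mk (a α) with hb
    have hbm : ∀ α, StronglyMeasurable (b α) := fun α => (ha α).1.stronglyMeasurable_mk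
    have hba : ∀ α, a α =ᵐ[μ] b α := fun α => (ha α).1.ae_eq_mk
    set G' : X → ℝ := fun x =>
      (∑' α : Fin d → ℕ, ENNReal.ofReal (|b α x| * r ^ (∑ i, α i))).toReal with hG'
    have hG'meas : Measurable G' := by
      apply Measurable.ennreal_toReal
      apply Measurable.ennreal_tsum
      intro α
      exact (((hbm α).measurable.abs).mul_const _).ennreal_ofReal
    have hab : ∀ᵐ x ∂μ, ∀ α, a α x = b α x := ae_all_iff.2 hba
    -- key pointwise facts
    have hkey : ∀ x : X, (∀ α, a α x = b α x) →
        Summable (fun α : Fin d → ℕ => |a α x| * r ^ (∑ i, α i)) →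
        (HasSum (fun α : Fin d → ℕ => |b α x| * r ^ (∑ i, α i)) (G' x) ∧
         (∑' α : Fin d → ℕ, |a α x| * r ^ (∑ i, α i)) = G' x) := by
      intro x hx hsx
      have h1 : ∀ α : Fin d → ℕ, |a α x| * r ^ (∑ i, α i)
          = |b α x| * r ^ (∑ i, α i) := fun α => by rw [hx α]
      have hsb : Summable (fun α : Fin d → ℕ => |b α x| * r ^ (∑ i, α i)) :=
        hsx.congr h1
      have hnnb : ∀ α : Fin d → ℕ, 0 ≤ |b α x| * r ^ (∑ i, α i) :=
        fun α => mul_nonneg (abs_nonneg _) (pow_nonneg hr.le _)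
      have hG'x : G' x = ∑' α : Fin d → ℕ, |b α x| * r ^ (∑ i, α i) := by
        rw [hG']
        simp only
        rw [← ENNReal.ofReal_tsum_of_nonneg hnnb hsb,
          ENNReal.toReal_ofReal (tsum_nonneg hnnb)]
      refine ⟨?_, ?_⟩
      · rw [hG'x]; exact hsb.hasSum
      · rw [tsum_congr h1, hG'x]
    -- a.e. equality with G'
    have hGG' : (fun x => ∑' α : Fin d → ℕ, |a α x| * r ^ (∑ i, α i)) =ᵐ[μ] G' := by
      filter_upwards [hab, hAE] with x hx hsx
      exact (hkey x hx hsx).2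
    -- sequence of finsets
    haveI : (atTop : Filter (Finset (Fin d → ℕ))).NeBot := atTop_neBot
    obtain ⟨t, ht⟩ := Filter.exists_seq_tendsto (atTop : Filter (Finset (Fin d → ℕ)))
    have hptw : ∀ᵐ x ∂μ, Tendsto
        (fun n => ∑ α ∈ t n, |b α x| * r ^ (∑ i, α i)) atTop (𝓝 (G' x)) := by
      filter_upwards [hab, hAE] with x hx hsx
      exact ((hkey x hx hsx).1).comp ht
    have hterm : ∀ α : Fin d → ℕ,
        eLpNorm (fun x => |b α x| * r ^ (∑ i, α i)) s μ
          = ENNReal.ofReal (r ^ (∑ i, α i)) * eLpNorm (a α) s μ := by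
      intro α
      have h2 : (fun x => |b α x| * r ^ (∑ i, α i))
          = (r ^ (∑ i, α i)) • (fun x => |b α x|) := by
        funext x; simp [mul_comm]
      rw [h2, eLpNorm_const_smul]
      congr 1
      · exact Real.enorm_eq_ofReal (pow_nonneg hr.le _)
      · rw [show (fun x => |b α x|) = fun x => ‖b α x‖ from rfl, eLpNorm_norm]
        exact (eLpNorm_congr_ae (hba α)).symm
    have hfn_bound : ∀ n, eLpNorm
        (fun x => ∑ α ∈ t n, |b α x| * r ^ (∑ i, α i)) s μ ≤ C := by
      intro n
      have h3 : (fun x => ∑ α ∈ t n, |b α x| * r ^ (∑ i, α i))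
          = ∑ α ∈ t n, (fun x => |b α x| * r ^ (∑ i, α i)) := by
        funext x; simp
      rw [h3]
      calc eLpNorm (∑ α ∈ t n, (fun x => |b α x| * r ^ (∑ i, α i))) s μ
          ≤ ∑ α ∈ t n, eLpNorm (fun x => |b α x| * r ^ (∑ i, α i)) s μ :=
            eLpNorm_sum_le (fun α _ =>
              (((hbm α).measurable.abs).mul_const _).aestronglyMeasurable) hs
        _ = ∑ α ∈ t n, ENNReal.ofReal (r ^ (∑ i, α i)) * eLpNorm (a α) s μ := by
            exact Finset.sum_congr rfl fun α _ => hterm α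
        _ ≤ ∑' α : Fin d → ℕ, ENNReal.ofReal (r ^ (∑ i, α i)) * eLpNorm (a α) s μ :=
            ENNReal.sum_le_tsum _
        _ = C := hCsum
    have hG'snorm : eLpNorm G' s μ ≤ C := by
      refine le_trans (Lp.eLpNorm_lim_le_liminf_eLpNorm (f := fun n x =>
        ∑ α ∈ t n, |b α x| * r ^ (∑ i, α i)) (fun n =>
          (Finset.measurable_sum _ (fun α _ =>
            ((hbm α).measurable.abs).mul_const _)).aestronglyMeasurable) G' hptw) ?_
      calc atTop.liminf (fun n => eLpNorm
            (fun x => ∑ α ∈ t n, |b α x| * r ^ (∑ i, α i)) s μ)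
          ≤ atTop.liminf (fun _ : ℕ => C) :=
            Filter.liminf_le_liminf (Filter.Eventually.of_forall hfn_bound)
        _ = C := Filter.liminf_const _
    have hG'mem : MemLp G' s μ :=
      ⟨hG'meas.aestronglyMeasurable, lt_of_le_of_lt hG'snorm hC_lt⟩
    exact hG'mem.ae_eq hGG'.symm
  · -- the pointwise bound
    filter_upwards [hAE] with x hx u hu
    have habs_eq : ∀ α : Fin d → ℕ,
        |a α x * ∏ i, u i ^ α i| = |a α x| * ∏ i, |u i| ^ α i := fun α => by
      rw [abs_mul, Finset.abs_prod]
      simp [abs_pow]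
    have hsum : Summable (fun α : Fin d → ℕ => |a α x| * ∏ i, |u i| ^ α i) :=
      hx.of_nonneg_of_le (hnn x u) (key_le x u hu)
    have hsumabs : Summable (fun α : Fin d → ℕ => |a α x * ∏ i, u i ^ α i|) :=
      hsum.congr fun α => (habs_eq α).symm
    calc |∑' α : Fin d → ℕ, a α x * ∏ i, u i ^ α i|
        ≤ ∑' α : Fin d → ℕ, |a α x| * ∏ i, |u i| ^ α i := by
          have h4 := norm_tsum_le_tsum_norm
            (f := fun α : Fin d → ℕ => a α x * ∏ i, u i ^ α i) hsumabs
          simpa [Real.norm_eq_abs, habs_eq] using h4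
      _ ≤ ∑' α : Fin d → ℕ, |a α x| * r ^ (∑ i, α i) :=
          Summable.tsum_le_tsum (fun α => key_le x u hu α) hsum hx
end

section
/- Fix λ, λ_l > 0 and integrable functions D, D_l ≥ 0 on a compact set W with ∫ D > 0, and a bounded measurable function c on W. Let (ζ_n) be a sequence of random continuous functions on W that is bounded in probability in sup norm. Define for β > 0 the normalized functional E_n(β) = (∫ D_l(w) S_{λ_l}(ζ_n(w), β) c(w) dw) / (∫ D(w) S_λ(ζ_n(w), β) dw), where S_α(a, β) = ∫₀^∞ t^{α−1} e^{−t + a√(βt)} dt. Then as β → 0, E_n(β) = (Γ(λ_l)/Γ(λ)) · (∫ D_l c dw)/(∫ D dw) + O_p(√β). -/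
open MeasureTheory Filter Set
open scoped ENNReal

lemma exp_sub_one_abs (x : ℝ) : |Real.exp x - 1| ≤ |x| * Real.exp |x| := by
  rcases le_or_gt 0 x with h | h
  · have h1 : 1 - x ≤ Real.exp (-x) := by linarith [Real.add_one_le_exp (-x)]
    have h2 : Real.exp x * (1 - x) ≤ 1 := by
      calc Real.exp x * (1 - x) ≤ Real.exp x * Real.exp (-x) :=
            mul_le_mul_of_nonneg_left h1 (Real.exp_pos x).le
        _ = 1 := by rw [← Real.exp_add]; simp
    rw [abs_of_nonneg h, abs_of_nonneg (by linarith [Real.add_one_le_exp x] : (0:ℝ) ≤ Real.exp x - 1)]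
    nlinarith
  · have h1 : x + 1 ≤ Real.exp x := Real.add_one_le_exp x
    have h2 : -x + 1 ≤ Real.exp (-x) := Real.add_one_le_exp (-x)
    have h3 : Real.exp x ≤ 1 := Real.exp_le_one_iff.mpr h.le
    rw [abs_of_neg h, abs_of_nonpos (by linarith : Real.exp x - 1 ≤ 0)]
    nlinarith [mul_nonneg (by linarith : (0:ℝ) ≤ -x) (by linarith : (0:ℝ) ≤ Real.exp (-x) - 1)]

lemma intS {s : ℝ} (hs : 0 < s) (c : ℝ) :
    IntegrableOn (fun t : ℝ => t ^ (s - 1) * Real.exp (-t + c * Real.sqrt t)) (Set.Ioi 0) := by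
  have hbase : IntegrableOn (fun t : ℝ => Real.exp (|c|^2/2) * (t ^ (s-1) * Real.exp (-(1/2) * t))) (Set.Ioi 0) := by
    have := integrableOn_rpow_mul_exp_neg_mul_rpow (p := 1) (s := s - 1) (b := 1/2)
      (by linarith) one_pos (by norm_num)
    simp only [Real.rpow_one] at this
    exact this.const_mul _
  refine hbase.mono' ?_ ?_
  · apply AEStronglyMeasurable.mul
    · exact (continuousOn_id.rpow_const (fun x hx => Or.inl (ne_of_gt hx))).aestronglyMeasurable measurableSet_Ioi
    · exact (Real.continuous_exp.comp (by continuity)).aestronglyMeasurable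
  · filter_upwards [ae_restrict_mem measurableSet_Ioi] with t ht
    have ht0 : (0:ℝ) < t := ht
    have h1 : c * Real.sqrt t ≤ |c| * Real.sqrt t := by
      apply mul_le_mul_of_nonneg_right (le_abs_self c) (Real.sqrt_nonneg t)
    have h2 : |c| * Real.sqrt t ≤ |c|^2/2 + t/2 := by
      nlinarith [sq_nonneg (|c| - Real.sqrt t), Real.sq_sqrt ht0.le, Real.sqrt_nonneg t, abs_nonneg c]
    have h3 : Real.exp (-t + c * Real.sqrt t) ≤ Real.exp (|c|^2/2) * Real.exp (-(1/2)*t) := by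
      rw [← Real.exp_add]
      apply Real.exp_le_exp.2; linarith
    rw [Real.norm_eq_abs, abs_mul, abs_of_nonneg (Real.rpow_nonneg ht0.le _),
      abs_of_nonneg (Real.exp_pos _).le]
    calc t ^ (s-1) * Real.exp (-t + c * Real.sqrt t)
        ≤ t ^ (s-1) * (Real.exp (|c|^2/2) * Real.exp (-(1/2)*t)) :=
          mul_le_mul_of_nonneg_left h3 (Real.rpow_nonneg ht0.le _)
      _ = Real.exp (|c|^2/2) * (t ^ (s-1) * Real.exp (-(1/2)*t)) := by ring

noncomputable def Sd (α a β : ℝ) : ℝ :=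
  ∫ t in Set.Ioi (0:ℝ), t ^ (α - 1) * Real.exp (-t + a * Real.sqrt (β * t))

lemma Sd_integrable {α : ℝ} (hα : 0 < α) (a β : ℝ) (hβ : 0 ≤ β) :
    IntegrableOn (fun t : ℝ => t ^ (α - 1) * Real.exp (-t + a * Real.sqrt (β * t)))
      (Set.Ioi 0) := by
  refine (intS hα (a * Real.sqrt β)).congr_fun ?_ measurableSet_Ioi
  intro t ht
  dsimp only
  rw [Real.sqrt_mul hβ]
  ring_nf

lemma Sd_monotone {α : ℝ} (hα : 0 < α) (β : ℝ) (hβ : 0 ≤ β) :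
    Monotone (fun a => Sd α a β) := by
  intro a b hab
  refine setIntegral_mono_on (Sd_integrable hα a β hβ) (Sd_integrable hα b β hβ)
    measurableSet_Ioi ?_
  intro t ht
  have ht0 : (0:ℝ) < t := ht
  have h1 : a * Real.sqrt (β * t) ≤ b * Real.sqrt (β * t) :=
    mul_le_mul_of_nonneg_right hab (Real.sqrt_nonneg _)
  have h2 := Real.exp_le_exp.2 (by linarith : -t + a * Real.sqrt (β * t) ≤ -t + b * Real.sqrt (β * t))
  exact mul_le_mul_of_nonneg_left h2 (Real.rpow_nonneg ht0.le _)

lemma Sd_bound {α : ℝ} (hα : 0 < α) {K : ℝ} (hK : 0 ≤ K) :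
    ∃ M : ℝ, 0 ≤ M ∧ ∀ a β : ℝ, |a| ≤ K → 0 < β → β ≤ 1 →
      |Sd α a β - Real.Gamma α| ≤ M * Real.sqrt β := by
  set base : ℝ := ∫ t in Set.Ioi (0:ℝ), t ^ (α + 1/2 - 1) * Real.exp (-t + K * Real.sqrt t) with hbase
  have hbase0 : 0 ≤ base := by
    apply setIntegral_nonneg measurableSet_Ioi
    intro t ht
    have ht0 : (0:ℝ) < t := ht
    positivity
  refine ⟨K * base, mul_nonneg hK hbase0, ?_⟩
  intro a β ha hβ hβ1
  have hβ0 : (0:ℝ) ≤ β := hβ.le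
  have hsβ1 : Real.sqrt β ≤ 1 := by
    rw [show (1:ℝ) = Real.sqrt 1 by simp]
    exact Real.sqrt_le_sqrt hβ1
  have hΓ : Real.Gamma α = ∫ t in Set.Ioi (0:ℝ), Real.exp (-t) * t ^ (α - 1) :=
    Real.Gamma_eq_integral hα
  have hint1 := Sd_integrable hα a β hβ0
  have hint2 : IntegrableOn (fun t : ℝ => Real.exp (-t) * t ^ (α - 1)) (Set.Ioi 0) :=
    Real.GammaIntegral_convergent hα
  have hsub : Sd α a β - Real.Gamma α =
      ∫ t in Set.Ioi (0:ℝ),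
        (t ^ (α - 1) * Real.exp (-t + a * Real.sqrt (β * t)) - Real.exp (-t) * t ^ (α - 1)) := by
    rw [Sd, hΓ, integral_sub hint1 hint2]
  have hintg : IntegrableOn
      (fun t : ℝ => (K * Real.sqrt β) * (t ^ (α + 1/2 - 1) * Real.exp (-t + K * Real.sqrt t)))
      (Set.Ioi 0) := (intS (by linarith) K).const_mul _
  have key : ‖∫ t in Set.Ioi (0:ℝ),
        (t ^ (α - 1) * Real.exp (-t + a * Real.sqrt (β * t)) - Real.exp (-t) * t ^ (α - 1))‖ ≤
      ∫ t in Set.Ioi (0:ℝ),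
        (K * Real.sqrt β) * (t ^ (α + 1/2 - 1) * Real.exp (-t + K * Real.sqrt t)) := by
    refine norm_integral_le_of_norm_le hintg ?_
    filter_upwards [ae_restrict_mem measurableSet_Ioi] with t ht
    have ht0 : (0:ℝ) < t := ht
    have hst : Real.sqrt (β * t) = Real.sqrt β * Real.sqrt t := Real.sqrt_mul hβ0 t
    have hx : t ^ (α - 1) * Real.exp (-t + a * Real.sqrt (β * t)) - Real.exp (-t) * t ^ (α - 1)
        = t ^ (α - 1) * Real.exp (-t) * (Real.exp (a * Real.sqrt β * Real.sqrt t) - 1) := by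
      rw [hst, ← mul_assoc, Real.exp_add]
      ring
    rw [hx, Real.norm_eq_abs, abs_mul,
      abs_of_nonneg (by positivity : (0:ℝ) ≤ t ^ (α - 1) * Real.exp (-t))]
    set x := a * Real.sqrt β * Real.sqrt t with hxdef
    have hxa : |x| ≤ K * Real.sqrt β * Real.sqrt t := by
      rw [hxdef, abs_mul, abs_mul, abs_of_nonneg (Real.sqrt_nonneg β),
        abs_of_nonneg (Real.sqrt_nonneg t)]
      have := mul_le_mul_of_nonneg_right (mul_le_mul_of_nonneg_right ha (Real.sqrt_nonneg β))
        (Real.sqrt_nonneg t)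
      linarith
    have hxK : |x| ≤ K * Real.sqrt t := by
      refine hxa.trans ?_
      have : K * Real.sqrt β ≤ K * 1 := mul_le_mul_of_nonneg_left hsβ1 hK
      nlinarith [Real.sqrt_nonneg t]
    have h1 : |Real.exp x - 1| ≤ |x| * Real.exp |x| := exp_sub_one_abs x
    have h2 : |x| * Real.exp |x| ≤ (K * Real.sqrt β * Real.sqrt t) * Real.exp (K * Real.sqrt t) := by
      refine mul_le_mul hxa (Real.exp_le_exp.2 hxK) (Real.exp_pos _).le ?_
      positivity
    have hsq : Real.sqrt t = t ^ ((1:ℝ)/2) := Real.sqrt_eq_rpow t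
    have hpow : t ^ (α - 1) * Real.sqrt t = t ^ (α + 1/2 - 1) := by
      rw [hsq, ← Real.rpow_add ht0, show α - 1 + 1/2 = α + 1/2 - 1 by ring]
    calc t ^ (α - 1) * Real.exp (-t) * |Real.exp x - 1|
        ≤ t ^ (α - 1) * Real.exp (-t) * ((K * Real.sqrt β * Real.sqrt t) * Real.exp (K * Real.sqrt t)) := by
          refine mul_le_mul_of_nonneg_left (h1.trans h2) (by positivity)
      _ = (K * Real.sqrt β) * (t ^ (α + 1/2 - 1) * (Real.exp (-t) * Real.exp (K * Real.sqrt t))) := by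
          rw [← hpow]; ring
      _ = (K * Real.sqrt β) * (t ^ (α + 1/2 - 1) * Real.exp (-t + K * Real.sqrt t)) := by
          rw [← Real.exp_add]
  rw [hsub]
  calc |∫ t in Set.Ioi (0:ℝ),
        (t ^ (α - 1) * Real.exp (-t + a * Real.sqrt (β * t)) - Real.exp (-t) * t ^ (α - 1))| ≤
      ∫ t in Set.Ioi (0:ℝ),
        (K * Real.sqrt β) * (t ^ (α + 1/2 - 1) * Real.exp (-t + K * Real.sqrt t)) := key
    _ = (K * Real.sqrt β) * base := by rw [integral_const_mul]
    _ = K * base * Real.sqrt β := by ring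

set_option maxHeartbeats 1000000 in
lemma main_det {d : ℕ} {W : Set (Fin d → ℝ)} (hWm : MeasurableSet W)
    {lam laml : ℝ} (hlam : 0 < lam) (hlaml : 0 < laml)
    {D Dl : (Fin d → ℝ) → ℝ} (hD0 : ∀ w, 0 ≤ D w) (hDl0 : ∀ w, 0 ≤ Dl w)
    (hDint : IntegrableOn D W) (hDlint : IntegrableOn Dl W)
    (hDpos : 0 < ∫ w in W, D w)
    {c : (Fin d → ℝ) → ℝ} (hcm : Measurable c) {Cb : ℝ} (hcb : ∀ w, |c w| ≤ Cb)
    {K : ℝ} (hK : 0 ≤ K) {M Ml : ℝ} (hM0 : 0 ≤ M) (hMl0 : 0 ≤ Ml)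
    (hM : ∀ a β : ℝ, |a| ≤ K → 0 < β → β ≤ 1 →
      |Sd lam a β - Real.Gamma lam| ≤ M * Real.sqrt β)
    (hMl : ∀ a β : ℝ, |a| ≤ K → 0 < β → β ≤ 1 →
      |Sd laml a β - Real.Gamma laml| ≤ Ml * Real.sqrt β)
    {f : (Fin d → ℝ) → ℝ} (hfc : ContinuousOn f W) (hfK : ∀ w ∈ W, |f w| ≤ K)
    {β : ℝ} (hβ : 0 < β) (hβ1 : β ≤ 1)
    (hβδ : M * Real.sqrt β * (∫ w in W, D w) ≤ Real.Gamma lam * (∫ w in W, D w) / 2) :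
    |(∫ w in W, Dl w * Sd laml (f w) β * c w) / (∫ w in W, D w * Sd lam (f w) β) -
      (Real.Gamma laml / Real.Gamma lam) * ((∫ w in W, Dl w * c w) / (∫ w in W, D w))| ≤
    (2 * (Ml * Cb * (∫ w in W, Dl w) * (Real.Gamma lam * (∫ w in W, D w)) +
        Real.Gamma laml * Cb * (∫ w in W, Dl w) * (M * (∫ w in W, D w))) /
      (Real.Gamma lam * (∫ w in W, D w))^2) * Real.sqrt β := by
  set Γ := Real.Gamma lam with hΓdef
  set Γl := Real.Gamma laml with hΓldef
  set I := ∫ w in W, D w with hIdef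
  set Il := ∫ w in W, Dl w with hIldef
  set J := ∫ w in W, Dl w * c w with hJdef
  have hΓ : 0 < Γ := Real.Gamma_pos_of_pos hlam
  have hΓl : 0 < Γl := Real.Gamma_pos_of_pos hlaml
  have hIl : 0 ≤ Il := setIntegral_nonneg hWm (fun w _ => hDl0 w)
  have hCb : 0 ≤ Cb := le_trans (abs_nonneg _) (hcb (fun _ => 0))
  have hsβ1 : Real.sqrt β ≤ 1 := by
    rw [show (1:ℝ) = Real.sqrt 1 by simp]
    exact Real.sqrt_le_sqrt hβ1
  have hsβ0 : 0 ≤ Real.sqrt β := Real.sqrt_nonneg β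
  have hfm : AEMeasurable f (volume.restrict W) := hfc.aemeasurable hWm
  have gS : AEMeasurable (fun w => Sd lam (f w) β) (volume.restrict W) :=
    ((Sd_monotone hlam β hβ.le).measurable).comp_aemeasurable hfm
  have gSl : AEMeasurable (fun w => Sd laml (f w) β) (volume.restrict W) :=
    ((Sd_monotone hlaml β hβ.le).measurable).comp_aemeasurable hfm
  have hb1 : ∀ w ∈ W, |Sd lam (f w) β - Γ| ≤ M * Real.sqrt β :=
    fun w hw => hM (f w) β (hfK w hw) hβ hβ1
  have hb1l : ∀ w ∈ W, |Sd laml (f w) β - Γl| ≤ Ml * Real.sqrt β :=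
    fun w hw => hMl (f w) β (hfK w hw) hβ hβ1
  have habs : ∀ w ∈ W, |Sd lam (f w) β| ≤ Γ + M := by
    intro w hw
    have h := abs_le.1 (hb1 w hw)
    have hMs : M * Real.sqrt β ≤ M := by
      calc M * Real.sqrt β ≤ M * 1 := mul_le_mul_of_nonneg_left hsβ1 hM0
        _ = M := mul_one M
    rw [abs_le]; constructor <;> [linarith [h.1]; linarith [h.2]]
  have habsl : ∀ w ∈ W, |Sd laml (f w) β| ≤ Γl + Ml := by
    intro w hw
    have h := abs_le.1 (hb1l w hw)
    have hMs : Ml * Real.sqrt β ≤ Ml := by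
      calc Ml * Real.sqrt β ≤ Ml * 1 := mul_le_mul_of_nonneg_left hsβ1 hMl0
        _ = Ml := mul_one Ml
    rw [abs_le]; constructor <;> [linarith [h.1]; linarith [h.2]]
  -- integrability of denominator integrand
  have hDen_int : IntegrableOn (fun w => D w * Sd lam (f w) β) W := by
    refine Integrable.mono' (hDint.mul_const (Γ + M))
      (hDint.aestronglyMeasurable.mul gS.aestronglyMeasurable) ?_
    rw [ae_restrict_iff' hWm]
    refine Filter.Eventually.of_forall (fun w hw => ?_)
    rw [Real.norm_eq_abs, abs_mul, abs_of_nonneg (hD0 w)]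
    exact mul_le_mul_of_nonneg_left (habs w hw) (hD0 w)
  have hNum_int : IntegrableOn (fun w => Dl w * Sd laml (f w) β * c w) W := by
    refine Integrable.mono' (hDlint.mul_const ((Γl + Ml) * Cb))
      ((hDlint.aestronglyMeasurable.mul gSl.aestronglyMeasurable).mul
        hcm.aestronglyMeasurable) ?_
    rw [ae_restrict_iff' hWm]
    refine Filter.Eventually.of_forall (fun w hw => ?_)
    rw [Real.norm_eq_abs, abs_mul, abs_mul, abs_of_nonneg (hDl0 w), ← mul_assoc]
    refine mul_le_mul ?_ (hcb w) (abs_nonneg _) ?_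
    · exact mul_le_mul_of_nonneg_left (habsl w hw) (hDl0 w)
    · exact mul_nonneg (hDl0 w) (by linarith [hΓl, hMl0] : (0:ℝ) ≤ Γl + Ml)
  have hDlc_int : IntegrableOn (fun w => Dl w * c w) W := by
    refine Integrable.mono' (hDlint.mul_const Cb)
      (hDlint.aestronglyMeasurable.mul hcm.aestronglyMeasurable)
      (Filter.Eventually.of_forall (fun w => ?_))
    rw [Real.norm_eq_abs, abs_mul, abs_of_nonneg (hDl0 w)]
    exact mul_le_mul_of_nonneg_left (hcb w) (hDl0 w)
  -- denominator error
  have hDen_err : |(∫ w in W, D w * Sd lam (f w) β) - Γ * I| ≤ M * Real.sqrt β * I := by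
    have h1 : Γ * I = ∫ w in W, D w * Γ := by
      rw [integral_mul_const]; ring
    rw [h1, ← integral_sub hDen_int (hDint.mul_const Γ)]
    have h2 : (∫ w in W, D w * (M * Real.sqrt β)) = M * Real.sqrt β * I := by
      rw [integral_mul_const]; ring
    rw [← Real.norm_eq_abs, ← h2]
    refine norm_integral_le_of_norm_le (hDint.mul_const _) ?_
    rw [ae_restrict_iff' hWm]
    refine Filter.Eventually.of_forall (fun w hw => ?_)
    rw [Real.norm_eq_abs, show D w * Sd lam (f w) β - D w * Γ = D w * (Sd lam (f w) β - Γ) by ring,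
      abs_mul, abs_of_nonneg (hD0 w)]
    exact mul_le_mul_of_nonneg_left (hb1 w hw) (hD0 w)
  -- numerator error
  have hNum_err : |(∫ w in W, Dl w * Sd laml (f w) β * c w) - Γl * J| ≤
      Ml * Real.sqrt β * Cb * Il := by
    have h1 : Γl * J = ∫ w in W, Γl * (Dl w * c w) := by rw [integral_const_mul]
    rw [h1, ← integral_sub hNum_int (hDlc_int.const_mul Γl)]
    have h2 : (∫ w in W, Dl w * (Ml * Real.sqrt β * Cb)) = Ml * Real.sqrt β * Cb * Il := by
      rw [integral_mul_const]; ring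
    rw [← Real.norm_eq_abs, ← h2]
    refine norm_integral_le_of_norm_le (hDlint.mul_const _) ?_
    rw [ae_restrict_iff' hWm]
    refine Filter.Eventually.of_forall (fun w hw => ?_)
    rw [Real.norm_eq_abs, show Dl w * Sd laml (f w) β * c w - Γl * (Dl w * c w) =
      Dl w * ((Sd laml (f w) β - Γl) * c w) by ring, abs_mul, abs_of_nonneg (hDl0 w), abs_mul]
    refine mul_le_mul_of_nonneg_left ?_ (hDl0 w)
    rw [show Ml * Real.sqrt β * Cb = (Ml * Real.sqrt β) * Cb by ring]
    exact mul_le_mul (hb1l w hw) (hcb w) (abs_nonneg _) (by positivity)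
  -- denominator lower bound
  set Dn := ∫ w in W, D w * Sd lam (f w) β with hDndef
  have hDn_lb : Γ * I / 2 ≤ Dn := by
    have h := abs_le.1 hDen_err
    linarith [h.1, hβδ]
  have hDn_pos : 0 < Dn := lt_of_lt_of_le (by positivity) hDn_lb
  have hJb : |J| ≤ Cb * Il := by
    have h2 : (∫ w in W, Dl w * Cb) = Cb * Il := by rw [integral_mul_const]; ring
    rw [← Real.norm_eq_abs, ← h2]
    refine norm_integral_le_of_norm_le (hDlint.mul_const _) (Filter.Eventually.of_forall fun w => ?_)
    rw [Real.norm_eq_abs, abs_mul, abs_of_nonneg (hDl0 w)]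
    exact mul_le_mul_of_nonneg_left (hcb w) (hDl0 w)
  set Nn := ∫ w in W, Dl w * Sd laml (f w) β * c w with hNndef
  have hL : (Γl / Γ) * (J / I) = (Γl * J) / (Γ * I) := by
    field_simp
  rw [hL, div_sub_div _ _ (ne_of_gt hDn_pos) (by positivity : Γ * I ≠ 0), abs_div]
  have hnum_b : |Nn * (Γ * I) - Dn * (Γl * J)| ≤
      Real.sqrt β * (Ml * Cb * Il * (Γ * I) + Γl * Cb * Il * (M * I)) := by
    have hsplit : Nn * (Γ * I) - Dn * (Γl * J) =
        (Nn - Γl * J) * (Γ * I) - (Γl * J) * (Dn - Γ * I) := by ring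
    rw [hsplit]
    refine (abs_sub _ _).trans ?_
    rw [abs_mul (Nn - Γl * J), abs_mul (Γl * J)]
    have h1 : |Nn - Γl * J| * |Γ * I| ≤ (Ml * Real.sqrt β * Cb * Il) * (Γ * I) := by
      rw [abs_of_nonneg (by positivity : (0:ℝ) ≤ Γ * I)]
      exact mul_le_mul_of_nonneg_right hNum_err (by positivity)
    have h2 : |Γl * J| * |Dn - Γ * I| ≤ (Γl * (Cb * Il)) * (M * Real.sqrt β * I) := by
      refine mul_le_mul ?_ hDen_err (abs_nonneg _) (by positivity)
      rw [abs_mul, abs_of_nonneg hΓl.le]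
      exact mul_le_mul_of_nonneg_left hJb hΓl.le
    calc |Nn - Γl * J| * |Γ * I| + |Γl * J| * |Dn - Γ * I| ≤
        (Ml * Real.sqrt β * Cb * Il) * (Γ * I) + (Γl * (Cb * Il)) * (M * Real.sqrt β * I) :=
          add_le_add h1 h2
      _ = Real.sqrt β * (Ml * Cb * Il * (Γ * I) + Γl * Cb * Il * (M * I)) := by ring
  have hden_b : (Γ * I) * (Γ * I) / 2 ≤ |Dn * (Γ * I)| := by
    rw [abs_of_nonneg (by positivity : (0:ℝ) ≤ Dn * (Γ * I))]
    calc (Γ * I) * (Γ * I) / 2 = (Γ * I / 2) * (Γ * I) := by ring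
      _ ≤ Dn * (Γ * I) := mul_le_mul_of_nonneg_right hDn_lb (by positivity)
  calc |Nn * (Γ * I) - Dn * (Γl * J)| / |Dn * (Γ * I)| ≤
      (Real.sqrt β * (Ml * Cb * Il * (Γ * I) + Γl * Cb * Il * (M * I))) /
        ((Γ * I) * (Γ * I) / 2) := by
        refine div_le_div₀ (by positivity) hnum_b (by positivity) hden_b
    _ = (2 * (Ml * Cb * Il * (Γ * I) + Γl * Cb * Il * (M * I)) / (Γ * I)^2) * Real.sqrt β := by
        field_simp

set_option maxHeartbeats 1000000 in
/-- With the fluctuation function `S_α(a,β) = ∫₀^∞ t^{α−1}e^{−t+a√(βt)}dt`,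
a tight (bounded in probability in sup norm) sequence of random continuous functions
`ζ_n`, nonnegative integrable `D, D_l` with `∫ D > 0` and bounded measurable `c`, the
normalized functional
`E_n(β) = (∫ D_l S_{λ_l}(ζ_n) c)/(∫ D S_λ(ζ_n))` satisfies
`E_n(β) = (Γ(λ_l)/Γ(λ))·(∫ D_l c)/(∫ D) + O_p(√β)` as `β → 0`. -/
theorem stmt_13 {Ω : Type*} [MeasurableSpace Ω] (P : Measure Ω) [IsProbabilityMeasure P]
    {d : ℕ} (W : Set (Fin d → ℝ)) (hW : IsCompact W)
    (lam laml : ℝ) (hlam : 0 < lam) (hlaml : 0 < laml)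
    (D Dl : (Fin d → ℝ) → ℝ) (hD0 : ∀ w, 0 ≤ D w) (hDl0 : ∀ w, 0 ≤ Dl w)
    (hDint : IntegrableOn D W) (hDlint : IntegrableOn Dl W)
    (hDpos : 0 < ∫ w in W, D w)
    (c : (Fin d → ℝ) → ℝ) (hcm : Measurable c) (Cb : ℝ) (hcb : ∀ w, |c w| ≤ Cb)
    (ζ : ℕ → Ω → (Fin d → ℝ) → ℝ)
    (hζc : ∀ n ω, ContinuousOn (ζ n ω) W)
    (hζbd : ∀ ε : ℝ≥0∞, 0 < ε → ∃ K : ℝ,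
      ∀ n, P {ω | ∃ w ∈ W, K < |ζ n ω w|} < ε)
    (Sfun : ℝ → ℝ → ℝ → ℝ)
    (hSfun : ∀ α a β, Sfun α a β =
      ∫ t in Set.Ioi (0 : ℝ), t ^ (α - 1) * Real.exp (-t + a * Real.sqrt (β * t)))
    (E : ℕ → ℝ → Ω → ℝ)
    (hE : ∀ n β ω, E n β ω =
      (∫ w in W, Dl w * Sfun laml (ζ n ω w) β * c w) /
      (∫ w in W, D w * Sfun lam (ζ n ω w) β)) :
    ∀ ε : ℝ≥0∞, 0 < ε → ∃ C : ℝ, ∃ δ > (0 : ℝ), ∀ n, ∀ β : ℝ, 0 < β → β < δ →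
      P {ω | C * Real.sqrt β <
        |E n β ω - (Real.Gamma laml / Real.Gamma lam) *
          ((∫ w in W, Dl w * c w) / (∫ w in W, D w))|} < ε := by
  intro ε hε
  obtain ⟨K, hK⟩ := hζbd ε hε
  have hK'0 : (0:ℝ) ≤ max K 0 := le_max_right K 0
  obtain ⟨M, hM0, hM⟩ := Sd_bound hlam hK'0
  obtain ⟨Ml, hMl0, hMl⟩ := Sd_bound hlaml hK'0
  have hWm : MeasurableSet W := hW.isClosed.measurableSet
  have hΓ : 0 < Real.Gamma lam := Real.Gamma_pos_of_pos hlam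
  have hI : 0 < ∫ w in W, D w := hDpos
  have hη0 : 0 < (Real.Gamma lam * (∫ w in W, D w)) / (2 * (M * (∫ w in W, D w) + 1)) := by
    positivity
  refine ⟨2 * (Ml * Cb * (∫ w in W, Dl w) * (Real.Gamma lam * (∫ w in W, D w)) +
        Real.Gamma laml * Cb * (∫ w in W, Dl w) * (M * (∫ w in W, D w))) /
      (Real.Gamma lam * (∫ w in W, D w))^2,
    min 1 (((Real.Gamma lam * (∫ w in W, D w)) / (2 * (M * (∫ w in W, D w) + 1)))^2),
    lt_min one_pos (by positivity), ?_⟩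
  intro n β hβ0 hβδ
  have hβ1 : β ≤ 1 := le_of_lt (lt_of_lt_of_le hβδ (min_le_left _ _))
  have hsβη : Real.sqrt β ≤
      (Real.Gamma lam * (∫ w in W, D w)) / (2 * (M * (∫ w in W, D w) + 1)) := by
    have h := le_of_lt (lt_of_lt_of_le hβδ (min_le_right _ _))
    have h2 := Real.sqrt_le_sqrt h
    rwa [Real.sqrt_sq hη0.le] at h2
  have hβδ' : M * Real.sqrt β * (∫ w in W, D w) ≤
      Real.Gamma lam * (∫ w in W, D w) / 2 := by
    have hMI : (0:ℝ) ≤ M * (∫ w in W, D w) := mul_nonneg hM0 hI.le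
    have hMI1 : (0:ℝ) < M * (∫ w in W, D w) + 1 := by linarith
    have h2 : (M * (∫ w in W, D w)) * Real.sqrt β ≤ (M * (∫ w in W, D w)) *
        ((Real.Gamma lam * (∫ w in W, D w)) / (2 * (M * (∫ w in W, D w) + 1))) :=
      mul_le_mul_of_nonneg_left hsβη hMI
    have h3 : (M * (∫ w in W, D w)) *
        ((Real.Gamma lam * (∫ w in W, D w)) / (2 * (M * (∫ w in W, D w) + 1))) ≤
        (M * (∫ w in W, D w) + 1) *
        ((Real.Gamma lam * (∫ w in W, D w)) / (2 * (M * (∫ w in W, D w) + 1))) :=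
      mul_le_mul_of_nonneg_right (by linarith) hη0.le
    have h4 : (M * (∫ w in W, D w) + 1) *
        ((Real.Gamma lam * (∫ w in W, D w)) / (2 * (M * (∫ w in W, D w) + 1))) =
        Real.Gamma lam * (∫ w in W, D w) / 2 := by
      field_simp
    nlinarith [h2, h3, h4]
  refine lt_of_le_of_lt (measure_mono ?_) (hK n)
  intro ω hω
  rw [Set.mem_setOf_eq] at hω
  by_contra hbad
  rw [Set.mem_setOf_eq] at hbad
  push_neg at hbad
  have hfK : ∀ w ∈ W, |ζ n ω w| ≤ max K 0 := fun w hw => (hbad w hw).trans (le_max_left K 0)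
  have hE' : E n β ω = (∫ w in W, Dl w * Sd laml (ζ n ω w) β * c w) /
      (∫ w in W, D w * Sd lam (ζ n ω w) β) := by
    rw [hE]
    congr 1
    · exact setIntegral_congr_fun hWm (fun w _ => by rw [hSfun]; rfl)
    · exact setIntegral_congr_fun hWm (fun w _ => by rw [hSfun]; rfl)
  have hdet := main_det hWm hlam hlaml hD0 hDl0 hDint hDlint hDpos hcm hcb hK'0 hM0 hMl0
    hM hMl (hζc n ω) hfK hβ0 hβ1 hβδ'
  rw [hE'] at hω
  exact absurd hω (not_lt.2 hdet)
end
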